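/- Let M and N be matroids with disjoint ground sets, let NM be the finitarization of M, NN the finitarization of N, and let D := M ⊕ N be the disjoint sum (Mathlib's Matroid.disjointSum), the matroid on E(M) ∪ E(N) whose independent sets are exactly the sets I ∪ J with I independent in M and J independent in N. Let P be the finitarization of D. Suppose M is nearly finitary but not n-nearly finitary for any n ∈ ℕ (with respect to NM), and N is nearly finitary (with respect to NN). Then D is nearly finitary but not n-nearly finitary for any n: for every base F of P and base B of D with B ⊆ F, F \ B is finite, and for every n ∈ ℕ there exist a base F of P and a base B of D with B ⊆ F and n < (F \ B).encard. -/

import Mathlib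

/-- `N` is the finitarization of `M`: same ground set, and a subset of the ground set is
independent in `N` iff all of its finite subsets are independent in `M`. -/
def IsFinitarization {α : Type*} (N M : Matroid α) : Prop :=
  N.E = M.E ∧ ∀ S ⊆ M.E, (N.Indep S ↔ ∀ J ⊆ S, J.Finite → M.Indep J)

/-!
Finitarization commutes with disjoint sums, so the finitarization of `M ⊕ N` is `NM ⊕ NN`. For
`B ⊆ F` bases of `M ⊕ N` and `NM ⊕ NN`, the gap `F \ B` splits along `E(M) ∪ E(N)` into a gap for
`M` and one for `N`, hence is finite. Conversely a large gap `F₀ \ B₀` for `M`, joined with any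
base `B₁` of `N` and a base of `NN` containing it, stays a gap of the sum.
-/

section

open Set Matroid

variable {α : Type*} {M N M' N' : Matroid α}

lemma Set.diff_eq_union_of_subset_union {F B X Y : Set α} (hF : F ⊆ X ∪ Y) :
    F \ B = (F ∩ X) \ (B ∩ X) ∪ (F ∩ Y) \ (B ∩ Y) := by
  rw [← inter_sdiff_distrib_right, ← inter_sdiff_distrib_right, ← inter_union_distrib_left,
    inter_eq_left.2 (sdiff_subset.trans hF)]

namespace IsFinitarization

lemma indep_of_indep (h : IsFinitarization N M) {I : Set α} (hI : M.Indep I) : N.Indep I :=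
  (h.2 I hI.subset_ground).2 fun _ hJ _ ↦ hI.subset hJ

lemma exists_isBase_superset (h : IsFinitarization N M) {B : Set α} (hB : M.IsBase B) :
    ∃ F, N.IsBase F ∧ B ⊆ F :=
  (h.indep_of_indep hB.indep).exists_isBase_superset

lemma unique (h : IsFinitarization N M) (h' : IsFinitarization N' M) : N = N' :=
  ext_indep (h.1.trans h'.1.symm) fun I hI ↦ by
    rw [h.1] at hI
    rw [h.2 I hI, h'.2 I hI]

lemma disjointSum (hM : IsFinitarization M' M) (hN : IsFinitarization N' N)
    (hMN : Disjoint M.E N.E) (hMN' : Disjoint M'.E N'.E) :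
    IsFinitarization (M'.disjointSum N' hMN') (M.disjointSum N hMN) := by
  refine ⟨by simp [hM.1, hN.1], fun S hS ↦ ?_⟩
  rw [disjointSum_ground_eq] at hS
  simp only [disjointSum_indep_iff, hM.1, hN.1, hM.2 _ inter_subset_right,
    hN.2 _ inter_subset_right, and_iff_left hS]
  refine ⟨fun ⟨hMS, hNS⟩ J hJS hJ ↦ ⟨hMS _ (inter_subset_inter_left _ hJS) (hJ.inter_of_left _),
    hNS _ (inter_subset_inter_left _ hJS) (hJ.inter_of_left _), hJS.trans hS⟩,
    fun h ↦ ⟨fun J hJ hJfin ↦ ?_, fun J hJ hJfin ↦ ?_⟩⟩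
  · simpa [inter_eq_left.2 (hJ.trans inter_subset_right)] using
      (h J (hJ.trans inter_subset_left) hJfin).1
  · simpa [inter_eq_left.2 (hJ.trans inter_subset_right)] using
      (h J (hJ.trans inter_subset_left) hJfin).2.1

end IsFinitarization

namespace Matroid

lemma disjointSum_isBase_union (hMN : Disjoint M.E N.E) {B₀ B₁ : Set α} (hB₀ : M.IsBase B₀)
    (hB₁ : N.IsBase B₁) : (M.disjointSum N hMN).IsBase (B₀ ∪ B₁) := by
  have hB₀N : Disjoint B₀ N.E := hMN.mono_left hB₀.subset_ground
  have hB₁M : Disjoint B₁ M.E := hMN.symm.mono_left hB₁.subset_ground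
  rw [disjointSum_isBase_iff, union_inter_distrib_right, union_inter_distrib_right,
    inter_eq_left.2 hB₀.subset_ground, hB₁M.inter_eq, union_empty, hB₀N.inter_eq, empty_union,
    inter_eq_left.2 hB₁.subset_ground]
  exact ⟨hB₀, hB₁, union_subset_union hB₀.subset_ground hB₁.subset_ground⟩

/-- For `Mfin` the finitarization of `M`, this says that `M` is nearly finitary. -/
def IsNearlyFinitaryWrt (Mfin M : Matroid α) : Prop :=
  ∀ F B, Mfin.IsBase F → M.IsBase B → B ⊆ F → (F \ B).Finite

lemma IsNearlyFinitaryWrt.disjointSum (hM : IsNearlyFinitaryWrt M' M)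
    (hN : IsNearlyFinitaryWrt N' N) (hME : M'.E = M.E) (hNE : N'.E = N.E)
    (hMN : Disjoint M.E N.E) (hMN' : Disjoint M'.E N'.E) :
    IsNearlyFinitaryWrt (M'.disjointSum N' hMN') (M.disjointSum N hMN) := by
  intro F B hF hB hBF
  rw [disjointSum_isBase_iff, hME, hNE] at hF
  rw [disjointSum_isBase_iff] at hB
  rw [diff_eq_union_of_subset_union hF.2.2]
  exact (hM _ _ hF.1 hB.1 (inter_subset_inter_left _ hBF)).union
    (hN _ _ hF.2.1 hB.2.1 (inter_subset_inter_left _ hBF))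

lemma exists_disjointSum_isBase_encard_diff_ge (hN : IsFinitarization N' N)
    (hMN : Disjoint M.E N.E) (hMN' : Disjoint M'.E N'.E) (hME : M'.E = M.E)
    {F₀ B₀ : Set α} (hF₀ : M'.IsBase F₀) (hB₀ : M.IsBase B₀) (hB₀F₀ : B₀ ⊆ F₀) :
    ∃ F B, (M'.disjointSum N' hMN').IsBase F ∧ (M.disjointSum N hMN).IsBase B ∧ B ⊆ F ∧
      (F₀ \ B₀).encard ≤ (F \ B).encard := by
  obtain ⟨B₁, hB₁⟩ := N.exists_isBase
  obtain ⟨F₁, hF₁, hB₁F₁⟩ := hN.exists_isBase_superset hB₁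
  have hF₀B₁ : Disjoint F₀ B₁ := hMN.mono (hME ▸ hF₀.subset_ground) hB₁.subset_ground
  refine ⟨F₀ ∪ F₁, B₀ ∪ B₁, disjointSum_isBase_union _ hF₀ hF₁,
    disjointSum_isBase_union _ hB₀ hB₁, union_subset_union hB₀F₀ hB₁F₁, encard_le_encard ?_⟩
  calc F₀ \ B₀ = F₀ \ (B₀ ∪ B₁) := by
        rw [← sdiff_sdiff, (hF₀B₁.mono_left sdiff_subset).sdiff_eq_left]
    _ ⊆ (F₀ ∪ F₁) \ (B₀ ∪ B₁) := sdiff_subset_sdiff_left subset_union_left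

end Matroid

end

/-- If `M` is nearly finitary but not `n`-nearly finitary for any `n`, and `N` is
nearly finitary, and their ground sets are disjoint, then the disjoint sum `M ⊕ N` is nearly
finitary but not `n`-nearly finitary for any `n`. -/
theorem stmt_9 {α : Type*} (M N : Matroid α) (hdisj : Disjoint M.E N.E)
    (NM NN P : Matroid α)
    (hNM : IsFinitarization NM M) (hNN : IsFinitarization NN N)
    (hP : IsFinitarization P (M.disjointSum N hdisj))
    (hMnearly : ∀ F B, NM.IsBase F → M.IsBase B → B ⊆ F → (F \ B).Finite)
    (hMnotk : ∀ n : ℕ, ∃ F B, NM.IsBase F ∧ M.IsBase B ∧ B ⊆ F ∧ (n : ℕ∞) < (F \ B).encard)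
    (hNnearly : ∀ F B, NN.IsBase F → N.IsBase B → B ⊆ F → (F \ B).Finite) :
    (∀ F B, P.IsBase F → (M.disjointSum N hdisj).IsBase B → B ⊆ F → (F \ B).Finite) ∧
      (∀ n : ℕ, ∃ F B, P.IsBase F ∧ (M.disjointSum N hdisj).IsBase B ∧ B ⊆ F ∧
        (n : ℕ∞) < (F \ B).encard) := by
  have hdisj' : Disjoint NM.E NN.E := by rwa [hNM.1, hNN.1]
  obtain rfl : P = NM.disjointSum NN hdisj' := hP.unique (hNM.disjointSum hNN hdisj hdisj')
  refine ⟨Matroid.IsNearlyFinitaryWrt.disjointSum hMnearly hNnearly hNM.1 hNN.1 hdisj hdisj',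
    fun n ↦ ?_⟩
  obtain ⟨F₀, B₀, hF₀, hB₀, hB₀F₀, hn⟩ := hMnotk n
  obtain ⟨F, B, hF, hB, hBF, hle⟩ :=
    Matroid.exists_disjointSum_isBase_encard_diff_ge hNN hdisj hdisj' hNM.1 hF₀ hB₀ hB₀F₀
  exact ⟨F, B, hF, hB, hBF, hn.trans_le hle⟩
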